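/- arXiv:2203.14226 — 4 statements merged into one kernel-verified Lean document; each statement's English description precedes it below -/
import Mathlib

section
/- Let n ≥ 3 and let f ∈ ℂ[x, λ₁, …, λ_{n-1}] be skew-symmetric in λ₁, …, λ_{n-1}. If f vanishes whenever λ_j = λ_k for some j ≠ k, and also whenever λ_j = 0 for some j, and additionally f(x + Σ_{j=2}^{n} λ_j, −Σ_{j=2}^{n} λ_j, λ₂, …, λ_{n-1}) · f(x, λ₂, …, λ_n) = 0 identically, then f = 0. -/
noncomputable section

/-- Evaluation of a polynomial in the variables `x` (the `none` variable, playing the role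
of `∂`) and `λ₁, …, λ_m` (the `some i` variables). -/
def ev {m : ℕ} (f : MvPolynomial (Option (Fin m)) ℂ) (x : ℂ) (l : Fin m → ℂ) : ℂ :=
  MvPolynomial.eval (fun v => v.elim x l) f

/-- with `m = n - 1` (so `n = m + 1 ≥ 3`), if a polynomial
`f ∈ ℂ[x, λ₁, …, λ_{n-1}]` is skew-symmetric in the `λ`'s, vanishes whenever two `λ`'s
coincide or one of them is `0`, and satisfies
`f(x + Σ_{j=2}^n λ_j, −Σ_{j=2}^n λ_j, λ₂, …, λ_{n-1}) · f(x, λ₂, …, λ_n) = 0`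
identically, then `f = 0`.  Here `μ = (λ₂, …, λ_n)` is a vector of `m` variables. -/
theorem stmt1 (m : ℕ) (hm : 2 ≤ m) (f : MvPolynomial (Option (Fin m)) ℂ)
    (hskew : ∀ (x : ℂ) (l : Fin m → ℂ) (i j : Fin m), i ≠ j →
      ev f x (fun t => l (Equiv.swap i j t)) = - ev f x l)
    (heq : ∀ (x : ℂ) (l : Fin m → ℂ) (j k : Fin m), j ≠ k → l j = l k → ev f x l = 0)
    (hzero : ∀ (x : ℂ) (l : Fin m → ℂ) (j : Fin m), l j = 0 → ev f x l = 0)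
    (hid : ∀ (x : ℂ) (μ : Fin m → ℂ),
      ev f (x + ∑ j, μ j)
          (fun s : Fin m => if (s : ℕ) = 0 then -(∑ j, μ j)
            else μ ⟨(s : ℕ) - 1, lt_of_le_of_lt (Nat.sub_le _ _) s.isLt⟩) *
        ev f x μ = 0) :
    f = 0 := by
  classical
  have hm0 : 0 < m := by omega
  set S : MvPolynomial (Option (Fin m)) ℂ := ∑ j : Fin m, MvPolynomial.X (some j) with hS
  set σ : Option (Fin m) → MvPolynomial (Option (Fin m)) ℂ := fun v =>
    v.elim (MvPolynomial.X none + S)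
      (fun s : Fin m => if (s : ℕ) = 0 then -S
        else MvPolynomial.X (some ⟨(s : ℕ) - 1,
          lt_of_le_of_lt (Nat.sub_le _ _) s.isLt⟩)) with hσ
  set g : MvPolynomial (Option (Fin m)) ℂ := MvPolynomial.bind₁ σ f with hg
  have hevg : ∀ (x : ℂ) (μ : Fin m → ℂ),
      ev g x μ = ev f (x + ∑ j, μ j)
        (fun s : Fin m => if (s : ℕ) = 0 then -(∑ j, μ j)
          else μ ⟨(s : ℕ) - 1, lt_of_le_of_lt (Nat.sub_le _ _) s.isLt⟩) := by
    intro x μ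
    show MvPolynomial.eval _ (MvPolynomial.bind₁ σ f) = _
    rw [show (MvPolynomial.eval (fun v : Option (Fin m) => v.elim x μ)
        (MvPolynomial.bind₁ σ f)) =
        MvPolynomial.eval (fun i => MvPolynomial.eval (fun v : Option (Fin m) => v.elim x μ)
          (σ i)) f from MvPolynomial.eval₂Hom_bind₁ _ _ _ _]
    have hpt : (fun i => MvPolynomial.eval (fun v : Option (Fin m) => v.elim x μ) (σ i))
        = (fun v : Option (Fin m) => v.elim (x + ∑ j, μ j)
          (fun s : Fin m => if (s : ℕ) = 0 then -(∑ j, μ j)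
            else μ ⟨(s : ℕ) - 1, lt_of_le_of_lt (Nat.sub_le _ _) s.isLt⟩)) := by
      funext v
      cases v with
      | none => simp [hσ, hS]
      | some s =>
        by_cases h0 : (s : ℕ) = 0 <;> simp [hσ, hS, h0]
    rw [hpt]
    rfl
  have hprod : g * f = 0 := by
    apply MvPolynomial.funext
    intro p
    have hp : (fun v : Option (Fin m) => v.elim (p none) (fun j => p (some j))) = p := by
      funext v; cases v <;> rfl
    rw [map_zero, map_mul]
    have h1 : MvPolynomial.eval p g = ev g (p none) (fun j => p (some j)) := by
      unfold ev; rw [hp]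
    have h2 : MvPolynomial.eval p f = ev f (p none) (fun j => p (some j)) := by
      unfold ev; rw [hp]
    rw [h1, h2, hevg]
    exact hid _ _
  rcases mul_eq_zero.mp hprod with hgz | hfz
  · -- g = 0 : use surjectivity of the substitution on points
    apply MvPolynomial.funext
    intro p
    rw [map_zero]
    set y : ℂ := p none with hy
    set l : Fin m → ℂ := fun j => p (some j) with hl
    set l' : ℕ → ℂ := fun k => if h : k < m then l ⟨k, h⟩ else 0 with hl'
    set last : Fin m := ⟨m - 1, by omega⟩ with hlast
    set μ : Fin m → ℂ := fun j =>
      if (j : ℕ) = m - 1 then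
        - l' 0 - ∑ t ∈ Finset.univ.erase last, l' ((t : ℕ) + 1)
      else l' ((j : ℕ) + 1) with hμ
    have hsum : ∑ j, μ j = - l' 0 := by
      rw [← Finset.add_sum_erase _ μ (Finset.mem_univ last)]
      have h1 : μ last = - l' 0 - ∑ t ∈ Finset.univ.erase last, l' ((t : ℕ) + 1) := by
        simp [hμ, hlast]
      have h2 : ∑ t ∈ Finset.univ.erase last, μ t
          = ∑ t ∈ Finset.univ.erase last, l' ((t : ℕ) + 1) := by
        apply Finset.sum_congr rfl
        intro t ht
        have htne : t ≠ last := (Finset.mem_erase.mp ht).1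
        have : (t : ℕ) ≠ m - 1 := fun h => htne (Fin.ext (by simp [hlast, h]))
        simp [hμ, this]
      rw [h1, h2]; ring
    have hgz0 := hevg (y + l' 0) μ
    rw [hgz] at hgz0
    have hx : y + l' 0 + ∑ j, μ j = y := by rw [hsum]; ring
    have hfun : (fun s : Fin m => if (s : ℕ) = 0 then -(∑ j, μ j)
        else μ ⟨(s : ℕ) - 1, lt_of_le_of_lt (Nat.sub_le _ _) s.isLt⟩) = l := by
      funext s
      by_cases h0 : (s : ℕ) = 0
      · have hs : s = ⟨0, hm0⟩ := Fin.ext h0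
        rw [if_pos h0, hsum, neg_neg, hs]
        simp [hl', hm0]
      · have hs1 : 0 < (s : ℕ) := Nat.pos_of_ne_zero h0
        have hslt : (s : ℕ) < m := s.isLt
        have hne : (s : ℕ) - 1 ≠ m - 1 := by omega
        rw [if_neg h0]
        have : μ ⟨(s : ℕ) - 1, lt_of_le_of_lt (Nat.sub_le _ _) s.isLt⟩
            = l' ((s : ℕ) - 1 + 1) := by simp [hμ, hne]
        rw [this]
        have : (s : ℕ) - 1 + 1 = (s : ℕ) := by omega
        rw [this]
        simp [hl', hslt]
    rw [hx, hfun] at hgz0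
    have h00 : ev (0 : MvPolynomial (Option (Fin m)) ℂ) (y + l' 0) μ = 0 := by
      simp [ev]
    have hp : (fun v : Option (Fin m) => v.elim y l) = p := by
      funext v; cases v <;> rfl
    have hev : ev f y l = MvPolynomial.eval p f := by unfold ev; rw [hp]
    rw [h00, hev] at hgz0
    exact hgz0.symm
  · exact hfz
end
end

section
/- Let h(x,y) = Σ_{i,j} a_{ij} x^i y^j be a polynomial in two variables over ℂ with antisymmetric coefficient matrix (a_{ij} = −a_{ji}). Then h satisfies the identity h(λ₁, λ₄)h(λ₂, λ₃) − h(λ₂, λ₄)h(λ₁, λ₃) + h(λ₃, λ₄)h(λ₁, λ₂) = 0 for all λ₁, λ₂, λ₃, λ₄ if and only if the coefficients satisfy a_{ij}a_{kl} − a_{ik}a_{jl} + a_{il}a_{jk} = 0 for all indices i, j, k, l. -/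
noncomputable section

/-- The polynomial function `h(x, y) = Σ_{i,j} a_{ij} x^i y^j` attached to a finitely
supported coefficient matrix `a`. -/
def Hval (a : (ℕ × ℕ) →₀ ℂ) (x y : ℂ) : ℂ :=
  a.sum fun p c => c * x ^ p.1 * y ^ p.2

open MvPolynomial Finsupp

/-- Auxiliary polynomial version of `Hval` in two of four variables. -/
noncomputable def Hp (a : (ℕ × ℕ) →₀ ℂ) (u v : Fin 4) : MvPolynomial (Fin 4) ℂ :=
  a.sum fun p c => MvPolynomial.monomial (Finsupp.single u p.1 + Finsupp.single v p.2) c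

lemma eval_Hp (a : (ℕ × ℕ) →₀ ℂ) (u v : Fin 4) (f : Fin 4 → ℂ) :
    MvPolynomial.eval f (Hp a u v) = Hval a (f u) (f v) := by
  unfold Hp Hval
  rw [map_finsuppSum]
  refine Finsupp.sum_congr fun p hp => ?_
  rw [MvPolynomial.eval_monomial,
    Finsupp.prod_add_index' (fun _ => pow_zero _) (fun _ _ _ => pow_add _ _ _)]
  simp [Finsupp.prod_single_index]
  ring

/-- canonical exponent vector -/
noncomputable def e (i j k l : ℕ) : Fin 4 →₀ ℕ :=
  Finsupp.single 0 i + Finsupp.single 1 j + Finsupp.single 2 k + Finsupp.single 3 l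

lemma e_apply (i j k l : ℕ) : e i j k l 0 = i ∧ e i j k l 1 = j ∧ e i j k l 2 = k ∧ e i j k l 3 = l := by
  refine ⟨?_, ?_, ?_, ?_⟩ <;> simp [e, Finsupp.single_apply]

lemma e_inj {i j k l i' j' k' l' : ℕ} :
    e i' j' k' l' = e i j k l ↔ (i' = i ∧ j' = j ∧ k' = k ∧ l' = l) := by
  constructor
  · intro h
    have h0 := DFunLike.congr_fun h 0
    have h1 := DFunLike.congr_fun h 1
    have h2 := DFunLike.congr_fun h 2
    have h3 := DFunLike.congr_fun h 3
    simp [e, Finsupp.single_apply] at h0 h1 h2 h3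
    exact ⟨h0, h1, h2, h3⟩
  · rintro ⟨rfl, rfl, rfl, rfl⟩; rfl

lemma rep (m : Fin 4 →₀ ℕ) : m = e (m 0) (m 1) (m 2) (m 3) := by
  ext x
  fin_cases x <;> simp [e, Finsupp.single_apply]

lemma coeff_Hp_mul (a : (ℕ × ℕ) →₀ ℂ) (u v u' v' : Fin 4) (m : Fin 4 →₀ ℕ) :
    MvPolynomial.coeff m (Hp a u v * Hp a u' v') =
      a.sum fun p c => a.sum fun q d =>
        if Finsupp.single u p.1 + Finsupp.single v p.2
            + (Finsupp.single u' q.1 + Finsupp.single v' q.2) = m then c * d else 0 := by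
  classical
  unfold Hp
  simp only [Finsupp.sum, Finset.sum_mul, Finset.mul_sum, MvPolynomial.coeff_sum,
    MvPolynomial.monomial_mul, MvPolynomial.coeff_monomial]
  rw [Finset.sum_comm]

lemma double_sum (a : (ℕ × ℕ) →₀ ℂ) (p₀ q₀ : ℕ × ℕ) :
    (a.sum fun p c => a.sum fun q d => if p = p₀ ∧ q = q₀ then c * d else 0)
      = a p₀ * a q₀ := by
  classical
  have inner : ∀ c : ℂ, (a.sum fun q d => if q = q₀ then c * d else 0) = c * a q₀ := by
    intro c
    rw [Finsupp.sum_ite_eq']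
    split_ifs with h
    · rfl
    · rw [Finsupp.notMem_support_iff.mp h, mul_zero]
  calc (a.sum fun p c => a.sum fun q d => if p = p₀ ∧ q = q₀ then c * d else 0)
      = a.sum fun p c => if p = p₀ then c * a q₀ else 0 := by
        refine Finsupp.sum_congr fun p hp => ?_
        by_cases h : p = p₀
        · subst h
          simp only [true_and]
          exact inner _
        · simp [h]
    _ = a p₀ * a q₀ := by
        rw [Finsupp.sum_ite_eq']
        split_ifs with h
        · rfl
        · rw [Finsupp.notMem_support_iff.mp h, zero_mul]

/-- the full polynomial -/
noncomputable def Pa (a : (ℕ × ℕ) →₀ ℂ) : MvPolynomial (Fin 4) ℂ :=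
  Hp a 0 3 * Hp a 1 2 - Hp a 1 3 * Hp a 0 2 + Hp a 2 3 * Hp a 0 1

lemma coeff_Pa (a : (ℕ × ℕ) →₀ ℂ) (i j k l : ℕ) :
    MvPolynomial.coeff (e i j k l) (Pa a)
      = a (i, l) * a (j, k) - a (j, l) * a (i, k) + a (k, l) * a (i, j) := by
  classical
  have t1 : MvPolynomial.coeff (e i j k l) (Hp a 0 3 * Hp a 1 2) = a (i, l) * a (j, k) := by
    rw [coeff_Hp_mul]
    have hc : ∀ p q : ℕ × ℕ,
        (Finsupp.single (0 : Fin 4) p.1 + Finsupp.single 3 p.2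
          + (Finsupp.single 1 q.1 + Finsupp.single 2 q.2) = e i j k l)
        ↔ (p = (i, l) ∧ q = (j, k)) := by
      intro p q
      rw [show Finsupp.single (0 : Fin 4) p.1 + Finsupp.single 3 p.2
          + (Finsupp.single 1 q.1 + Finsupp.single 2 q.2) = e p.1 q.1 q.2 p.2 by
        unfold e; abel, e_inj, Prod.ext_iff, Prod.ext_iff]
      tauto
    simp only [hc]
    exact double_sum a (i, l) (j, k)
  have t2 : MvPolynomial.coeff (e i j k l) (Hp a 1 3 * Hp a 0 2) = a (j, l) * a (i, k) := by
    rw [coeff_Hp_mul]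
    have hc : ∀ p q : ℕ × ℕ,
        (Finsupp.single (1 : Fin 4) p.1 + Finsupp.single 3 p.2
          + (Finsupp.single 0 q.1 + Finsupp.single 2 q.2) = e i j k l)
        ↔ (p = (j, l) ∧ q = (i, k)) := by
      intro p q
      rw [show Finsupp.single (1 : Fin 4) p.1 + Finsupp.single 3 p.2
          + (Finsupp.single 0 q.1 + Finsupp.single 2 q.2) = e q.1 p.1 q.2 p.2 by
        unfold e; abel, e_inj, Prod.ext_iff, Prod.ext_iff]
      tauto
    simp only [hc]
    exact double_sum a (j, l) (i, k)
  have t3 : MvPolynomial.coeff (e i j k l) (Hp a 2 3 * Hp a 0 1) = a (k, l) * a (i, j) := by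
    rw [coeff_Hp_mul]
    have hc : ∀ p q : ℕ × ℕ,
        (Finsupp.single (2 : Fin 4) p.1 + Finsupp.single 3 p.2
          + (Finsupp.single 0 q.1 + Finsupp.single 1 q.2) = e i j k l)
        ↔ (p = (k, l) ∧ q = (i, j)) := by
      intro p q
      rw [show Finsupp.single (2 : Fin 4) p.1 + Finsupp.single 3 p.2
          + (Finsupp.single 0 q.1 + Finsupp.single 1 q.2) = e q.1 q.2 p.1 p.2 by
        unfold e; abel, e_inj, Prod.ext_iff, Prod.ext_iff]
      tauto
    simp only [hc]
    exact double_sum a (k, l) (i, j)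
  unfold Pa
  rw [MvPolynomial.coeff_add, MvPolynomial.coeff_sub, t1, t2, t3]

lemma eval_Pa (a : (ℕ × ℕ) →₀ ℂ) (f : Fin 4 → ℂ) :
    MvPolynomial.eval f (Pa a)
      = Hval a (f 0) (f 3) * Hval a (f 1) (f 2) - Hval a (f 1) (f 3) * Hval a (f 0) (f 2)
        + Hval a (f 2) (f 3) * Hval a (f 0) (f 1) := by
  simp only [Pa, map_add, map_sub, map_mul, eval_Hp]

/-- for `h(x,y) = Σ a_{ij} x^i y^j` with antisymmetric coefficient matrix,
the identity `h(λ₁,λ₄)h(λ₂,λ₃) − h(λ₂,λ₄)h(λ₁,λ₃) + h(λ₃,λ₄)h(λ₁,λ₂) = 0` holds for all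
`λ₁, λ₂, λ₃, λ₄ ∈ ℂ` iff the Plücker relations
`a_{ij}a_{kl} − a_{ik}a_{jl} + a_{il}a_{jk} = 0` hold for all indices. -/
theorem stmt4 (a : (ℕ × ℕ) →₀ ℂ) (hanti : ∀ i j : ℕ, a (i, j) = - a (j, i)) :
    (∀ l1 l2 l3 l4 : ℂ,
        Hval a l1 l4 * Hval a l2 l3 - Hval a l2 l4 * Hval a l1 l3
          + Hval a l3 l4 * Hval a l1 l2 = 0) ↔
      (∀ i j k l : ℕ,
        a (i, j) * a (k, l) - a (i, k) * a (j, l) + a (i, l) * a (j, k) = 0) := by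
  constructor
  · intro H i j k l
    have hP : Pa a = 0 := by
      apply MvPolynomial.funext
      intro f
      rw [eval_Pa, map_zero]
      exact H (f 0) (f 1) (f 2) (f 3)
    have := congrArg (MvPolynomial.coeff (e i j k l)) hP
    rw [coeff_Pa, MvPolynomial.coeff_zero] at this
    linear_combination this
  · intro H l1 l2 l3 l4
    have hP : Pa a = 0 := by
      apply MvPolynomial.ext
      intro m
      rw [MvPolynomial.coeff_zero, rep m, coeff_Pa]
      linear_combination H (m 0) (m 1) (m 2) (m 3)
    have := congrArg (MvPolynomial.eval ![l1, l2, l3, l4]) hP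
    rw [eval_Pa, map_zero] at this
    simpa using this
end
end

section
/- Let R be an n-Lie conformal algebra and ℒie_p R := R[t₁^{±1},…,t_p^{±1}]/∂̃_p R[t₁^{±1},…,t_p^{±1}], where ∂̃_p = ∂ + ∂_{t₁} + ⋯ + ∂_{t_p}. Writing a_{m₁,…,m_p} for the class of a ⊗ t₁^{m₁}⋯t_p^{m_p}, the maps ∂_{tᵢ}(a_{m₁,…,m_p}) = mᵢ a_{m₁,…,mᵢ−1,…,m_p} are well-defined derivations of the n-Lie algebra ℒie_p R, i.e., ∂_{tᵢ}[x¹,…,xⁿ] = Σ_{j=1}^{n} [x¹,…,∂_{tᵢ}xʲ,…,xⁿ]. -/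
noncomputable section

open Finset

/-- The index `n - 2` (position of `λ_{n-1}`, the last conformal weight) in `Fin m`,
where `m = n - 1`. -/
def lastIdx (m : ℕ) [NeZero m] : Fin m :=
  ⟨m - 1, Nat.sub_lt (Nat.pos_of_ne_zero (NeZero.ne m)) Nat.one_pos⟩

/-- Divided power `z^(k) = z^k / k!`. -/
def dPow (z : ℂ) (k : ℕ) : ℂ := z ^ k / (k.factorial : ℂ)

variable {m : ℕ} [NeZero m] {R : Type*} [AddCommGroup R] [Module ℂ R]

/-- Evaluation of the `{λ₁,…,λ_{n-1}}`-bracket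
`[x¹ _{λ₁} ⋯ _{λ_{n-1}} x^n] = Σ_k λ₁^(k₁)⋯λ_{n-1}^(k_{n-1}) x¹_{(k₁)}⋯_{(k_{n-1})}x^n`
at complex values of the `λ`'s (here `m = n - 1`). -/
def pEval (prodl : (Fin m → ℕ) → MultilinearMap ℂ (fun _ : Fin (m + 1) => R) R)
    (lam : Fin m → ℂ) (x : Fin (m + 1) → R) : R :=
  ∑ᶠ k : Fin m → ℕ, (∏ s, dPow (lam s) (k s)) • prodl k x

/-- Evaluation of the bracket where the last conformal weight `λ_{n-1}` is replaced by the
operator `−∂ − c` (divided-power substitution), as needed for the conformal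
skew-symmetry in the last slot. -/
def pEvalOp (D : Module.End ℂ R)
    (prodl : (Fin m → ℕ) → MultilinearMap ℂ (fun _ : Fin (m + 1) => R) R)
    (lam : Fin m → ℂ) (c : ℂ) (x : Fin (m + 1) → R) : R :=
  ∑ᶠ k : Fin m → ℕ,
    (∏ s ∈ Finset.univ.erase (lastIdx m), dPow (lam s) (k s)) •
      (((k (lastIdx m)).factorial : ℂ)⁻¹ •
        ((-(D + c • (1 : Module.End ℂ R))) ^ (k (lastIdx m))) (prodl k x))

/-- An `n`-Lie conformal algebra with `n = m + 1`: a `ℂ[∂]`-module (a complex vector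
space `R` together with the action `D` of `∂`) with `n`-ary `k`-products
`x¹_{(k₁)}⋯_{(k_{n-1})}x^n` (multilinear over ℂ), satisfying, in terms of the associated
`λ`-brackets evaluated at complex points: local finiteness (C1), conformal
sesquilinearity (C2), skew-symmetry including the last-slot relation
`[x¹⋯x^{n-1}_{λ_{n-1}}x^n] = −[x¹⋯x^n_{−∂−λ₁−⋯−λ_{n-1}}x^{n-1}]` (C3), and the conformal
Filippov identity (C4). -/
structure NLieConfAlg (m : ℕ) [NeZero m] (R : Type*) [AddCommGroup R] [Module ℂ R] where
  D : Module.End ℂ R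
  prodl : (Fin m → ℕ) → MultilinearMap ℂ (fun _ : Fin (m + 1) => R) R
  locFin : ∀ x : Fin (m + 1) → R, ∃ N : ℕ, ∀ k : Fin m → ℕ, N ≤ ∑ s, k s → prodl k x = 0
  sesq : ∀ (lam : Fin m → ℂ) (x : Fin (m + 1) → R) (i : Fin m),
    pEval prodl lam (Function.update x i.castSucc (D (x i.castSucc)))
      = -(lam i) • pEval prodl lam x
  sesqLast : ∀ (lam : Fin m → ℂ) (x : Fin (m + 1) → R),
    pEval prodl lam (Function.update x (Fin.last m) (D (x (Fin.last m))))
      = D (pEval prodl lam x) + (∑ s, lam s) • pEval prodl lam x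
  skew : ∀ (lam : Fin m → ℂ) (x : Fin (m + 1) → R) (i j : Fin m), i ≠ j →
    pEval prodl (fun t => lam (Equiv.swap i j t))
        (fun t => x (Equiv.swap i.castSucc j.castSucc t))
      = - pEval prodl lam x
  skewLast : ∀ (lam : Fin m → ℂ) (x : Fin (m + 1) → R),
    pEval prodl lam x
      = - pEvalOp D prodl lam (∑ s, lam s)
          (fun t => x (Equiv.swap (Fin.castSucc (lastIdx m)) (Fin.last m) t))
  filippov : ∀ (lam : Fin (m + 1) → ℂ) (mus : Fin m → ℂ)
      (a : Fin (m + 1) → R) (b : Fin m → R),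
    ∑ i : Fin (m + 1), ((-1 : ℂ) ^ (m - (i : ℕ))) •
        pEval prodl (fun s => lam (i.succAbove s))
          (Fin.snoc (fun s => a (i.succAbove s))
            (pEval prodl (Function.update mus 0 (lam i)) (Fin.cons (a i) b)))
      = pEval prodl (Function.update mus 0 (∑ i, lam i))
          (Fin.cons (pEval prodl (fun s => lam s.castSucc) a) b)

/-- Generalized binomial coefficient `binom(z, k)` for `z ∈ ℤ`. -/
def genChoose (z : ℤ) (k : ℕ) : ℂ :=
  (∏ i ∈ Finset.range k, ((z : ℂ) - (i : ℂ))) / (k.factorial : ℂ)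

/-- The operator `∂̃_p = ∂ + ∂_{t₁} + ⋯ + ∂_{t_p}` on `R[t₁^{±1},…,t_p^{±1}]`
(modelled as `(Fin p → ℤ) →₀ R`). -/
def Dtilde {R : Type*} [AddCommGroup R] [Module ℂ R] (D : Module.End ℂ R) (p : ℕ) :
    ((Fin p → ℤ) →₀ R) →ₗ[ℂ] ((Fin p → ℤ) →₀ R) :=
  Finsupp.lsum ℂ (fun mm : Fin p → ℤ =>
    Finsupp.lsingle mm ∘ₗ (D : R →ₗ[ℂ] R) +
      ∑ i : Fin p, ((mm i : ℂ)) • Finsupp.lsingle (mm - Pi.single i 1))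

private lemma key_genChoose (z : ℤ) (k : ℕ) :
    (z : ℂ) * genChoose (z - 1) k = ((z : ℂ) - k) * genChoose z k := by
  unfold genChoose
  rw [mul_div_assoc', mul_div_assoc']
  congr 1
  have h1 := Finset.prod_range_succ (fun r => (z:ℂ) - r) k
  have h2 := Finset.prod_range_succ' (fun r => (z:ℂ) - r) k
  simp only [Nat.cast_zero, sub_zero] at h2
  rw [h1] at h2
  calc (z:ℂ) * (∏ r ∈ Finset.range k, ((((z:ℤ) - 1 : ℤ) : ℂ) - r))
      = (∏ r ∈ Finset.range k, ((z:ℂ) - ↑(r+1))) * z := by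
        rw [mul_comm]; congr 1; apply Finset.prod_congr rfl; intro r _; push_cast; ring
    _ = ((z:ℂ) - k) * ∏ r ∈ Finset.range k, ((z:ℂ) - r) := by rw [← h2]; ring

private lemma multilinear_eq_on_span {ι : Type*} [Fintype ι] [DecidableEq ι]
    {M N : Type*} [AddCommMonoid M] [Module ℂ M] [AddCommMonoid N] [Module ℂ N]
    (f g : MultilinearMap ℂ (fun _ : ι => M) N) (S : Set M)
    (hS : Submodule.span ℂ S = ⊤)
    (h : ∀ x : ι → M, (∀ i, x i ∈ S) → f x = g x) : ∀ x, f x = g x := by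
  suffices H : ∀ t : Finset ι, ∀ x : ι → M, (∀ i, i ∉ t → x i ∈ S) → f x = g x by
    intro x; exact H Finset.univ x (fun i hi => absurd (Finset.mem_univ i) hi)
  intro t
  induction t using Finset.induction with
  | empty => intro x hx; exact h x (fun i => hx i (Finset.notMem_empty i))
  | @insert a t ha ih =>
    intro x hx
    have hxa : x a ∈ (⊤ : Submodule ℂ M) := trivial
    rw [← hS] at hxa
    have key : ∀ y ∈ Submodule.span ℂ S,
        f (Function.update x a y) = g (Function.update x a y) := by
      intro y hy
      induction hy using Submodule.span_induction with
      | mem y hy =>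
        apply ih
        intro i hi
        rcases eq_or_ne i a with rfl | hia
        · simpa using hy
        · rw [Function.update_of_ne hia]
          exact hx i (by simp [hia, hi])
      | zero => rw [MultilinearMap.map_update_zero, MultilinearMap.map_update_zero]
      | add y z _ _ hy hz => rw [MultilinearMap.map_update_add, MultilinearMap.map_update_add, hy, hz]
      | smul c y _ hy => rw [MultilinearMap.map_update_smul, MultilinearMap.map_update_smul, hy]
    have := key (x a) hxa
    rwa [Function.update_eq_self] at this
section DtiSetup
variable {R : Type*} [AddCommGroup R] [Module ℂ R]

def Dti (p : ℕ) (i : Fin p) : ((Fin p → ℤ) →₀ R) →ₗ[ℂ] ((Fin p → ℤ) →₀ R) :=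
  Finsupp.lsum ℂ (fun mm : Fin p → ℤ => ((mm i : ℂ)) • Finsupp.lsingle (mm - Pi.single i 1))

lemma Dti_single {p : ℕ} (i : Fin p) (mm : Fin p → ℤ) (a : R) :
    Dti p i (Finsupp.single mm a)
      = (mm i : ℂ) • Finsupp.single (mm - Pi.single i 1) a := by
  simp [Dti, Finsupp.lsum_single]

lemma Dtilde_single (D : Module.End ℂ R) {p : ℕ} (mm : Fin p → ℤ) (a : R) :
    Dtilde D p (Finsupp.single mm a)
      = Finsupp.single mm (D a)
          + ∑ j : Fin p, (mm j : ℂ) • Finsupp.single (mm - Pi.single j 1) a := by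
  simp [Dtilde, Finsupp.lsum_single]

lemma Dti_comm_Dtilde (D : Module.End ℂ R) {p : ℕ} (i : Fin p)
    (y : (Fin p → ℤ) →₀ R) :
    Dti p i (Dtilde D p y) = Dtilde D p (Dti p i y) := by
  induction y using Finsupp.induction_linear with
  | zero => simp
  | add f g hf hg => simp [map_add, hf, hg]
  | single mm a =>
    rw [Dtilde_single, map_add, map_sum, Dti_single, Dti_single, map_smul, Dtilde_single,
      smul_add]
    congr 1
    rw [Finset.smul_sum]
    refine Finset.sum_congr rfl ?_
    intro j _
    rw [map_smul, Dti_single, smul_smul, smul_smul, sub_right_comm]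
    congr 1
    rcases eq_or_ne j i with rfl | hji
    · rfl
    · rw [Pi.sub_apply, Pi.sub_apply, Pi.single_eq_of_ne (Ne.symm hji),
        Pi.single_eq_of_ne hji]
      push_cast
      ring
end DtiSetup
section QuotSetup
variable {R : Type*} [AddCommGroup R] [Module ℂ R]

def dQuot (D : Module.End ℂ R) (p : ℕ) (i : Fin p) :
    (((Fin p → ℤ) →₀ R) ⧸ LinearMap.range (Dtilde D p)) →ₗ[ℂ]
      (((Fin p → ℤ) →₀ R) ⧸ LinearMap.range (Dtilde D p)) :=
  Submodule.liftQ _ ((LinearMap.range (Dtilde D p)).mkQ ∘ₗ Dti p i) (by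
    rintro y ⟨z, rfl⟩
    simp only [LinearMap.mem_ker, LinearMap.coe_comp, Function.comp_apply,
      Dti_comm_Dtilde, Submodule.mkQ_apply, Submodule.Quotient.mk_eq_zero]
    exact ⟨Dti p i z, rfl⟩)

lemma dQuot_mk (D : Module.End ℂ R) (p : ℕ) (i : Fin p) (y : (Fin p → ℤ) →₀ R) :
    dQuot D p i ((LinearMap.range (Dtilde D p)).mkQ y)
      = (LinearMap.range (Dtilde D p)).mkQ (Dti p i y) := rfl

lemma dQuot_single (D : Module.End ℂ R) (p : ℕ) (i : Fin p) (mm : Fin p → ℤ) (a : R) :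
    dQuot D p i ((LinearMap.range (Dtilde D p)).mkQ (Finsupp.single mm a))
      = (mm i : ℂ) • (LinearMap.range (Dtilde D p)).mkQ
          (Finsupp.single (mm - Pi.single i 1) a) := by
  rw [dQuot_mk, Dti_single, map_smul]

lemma span_monomials (D : Module.End ℂ R) (p : ℕ) :
    Submodule.span ℂ {v : ((Fin p → ℤ) →₀ R) ⧸ LinearMap.range (Dtilde D p) |
      ∃ mm a, v = (LinearMap.range (Dtilde D p)).mkQ (Finsupp.single mm a)} = ⊤ := by
  rw [eq_top_iff]
  rintro z -
  obtain ⟨y, rfl⟩ := Submodule.mkQ_surjective _ z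
  induction y using Finsupp.induction_linear with
  | zero => simp
  | add f g hf hg => rw [map_add]; exact Submodule.add_mem _ hf hg
  | single mm a => exact Submodule.subset_span ⟨mm, a, rfl⟩

end QuotSetup
private lemma scalar_identity {m : ℕ} {p : ℕ} (i : Fin p) (mm : Fin (m+1) → Fin p → ℤ)
    (jv : Fin m → Fin p → ℕ) :
    ∑ j : Fin (m+1), (mm j i : ℂ) *
        ∏ s : Fin m, ∏ i' : Fin p,
          genChoose ((Function.update mm j (mm j - Pi.single i 1)) s.castSucc i') (jv s i')
      = (((∑ s : Fin (m+1), mm s i) - ∑ s : Fin m, (jv s i : ℤ) : ℤ) : ℂ) *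
          ∏ s : Fin m, ∏ i' : Fin p, genChoose (mm s.castSucc i') (jv s i') := by
  have hterm : ∀ t : Fin m,
      (mm t.castSucc i : ℂ) * ∏ s : Fin m, ∏ i' : Fin p,
          genChoose ((Function.update mm t.castSucc (mm t.castSucc - Pi.single i 1))
            s.castSucc i') (jv s i')
        = ((mm t.castSucc i : ℂ) - (jv t i : ℂ)) *
            ∏ s : Fin m, ∏ i' : Fin p, genChoose (mm s.castSucc i') (jv s i') := by
    intro t
    rw [← Finset.prod_erase_mul _ _ (Finset.mem_univ t),
      ← Finset.prod_erase_mul _ _ (Finset.mem_univ t)]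
    have hs : ∀ s ∈ Finset.univ.erase t,
        (∏ i' : Fin p, genChoose ((Function.update mm t.castSucc
            (mm t.castSucc - Pi.single i 1)) s.castSucc i') (jv s i'))
          = ∏ i' : Fin p, genChoose (mm s.castSucc i') (jv s i') := by
      intro s hst
      refine Finset.prod_congr rfl fun i' _ => ?_
      rw [Function.update_of_ne (by
        simpa [Fin.castSucc_inj] using Finset.ne_of_mem_erase hst)]
    rw [Finset.prod_congr rfl hs, Function.update_self,
      ← Finset.prod_erase_mul _ _ (Finset.mem_univ i),
      ← Finset.prod_erase_mul _ _ (Finset.mem_univ i)]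
    have hi : ∀ i' ∈ Finset.univ.erase i,
        genChoose ((mm t.castSucc - Pi.single i 1 : Fin p → ℤ) i') (jv t i')
          = genChoose (mm t.castSucc i') (jv t i') := by
      intro i' hi'
      rw [Pi.sub_apply, Pi.single_eq_of_ne (Finset.ne_of_mem_erase hi'), sub_zero]
    rw [Finset.prod_congr rfl hi]
    have hie : (mm t.castSucc - Pi.single i 1 : Fin p → ℤ) i = mm t.castSucc i - 1 := by simp
    rw [hie]
    have hkey := key_genChoose (mm t.castSucc i) (jv t i)
    set P := ∏ s ∈ Finset.univ.erase t, ∏ i' : Fin p, genChoose (mm s.castSucc i') (jv s i')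
    set Q := ∏ i' ∈ Finset.univ.erase i, genChoose (mm t.castSucc i') (jv t i')
    linear_combination (P * Q) * hkey
  rw [Fin.sum_univ_castSucc]
  have hlast : (∏ s : Fin m, ∏ i' : Fin p,
      genChoose ((Function.update mm (Fin.last m)
        (mm (Fin.last m) - Pi.single i 1)) s.castSucc i') (jv s i'))
      = ∏ s : Fin m, ∏ i' : Fin p, genChoose (mm s.castSucc i') (jv s i') := by
    refine Finset.prod_congr rfl fun s _ => Finset.prod_congr rfl fun i' _ => ?_
    rw [Function.update_of_ne (Fin.castSucc_lt_last s).ne]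
  rw [hlast, Finset.sum_congr rfl (fun t _ => hterm t), ← Finset.sum_mul, ← add_mul,
    Finset.sum_sub_distrib]
  congr 1
  rw [Fin.sum_univ_castSucc]
  push_cast
  ring
private lemma deriv_mono {m : ℕ} [NeZero m] {R : Type*} [AddCommGroup R] [Module ℂ R]
    (A : NLieConfAlg m R) (p : ℕ)
    (B : MultilinearMap ℂ
      (fun _ : Fin (m + 1) => ((Fin p → ℤ) →₀ R) ⧸ LinearMap.range (Dtilde A.D p))
      (((Fin p → ℤ) →₀ R) ⧸ LinearMap.range (Dtilde A.D p)))
    (hB : ∀ (mm : Fin (m + 1) → Fin p → ℤ) (a : Fin (m + 1) → R),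
      B (fun s => (LinearMap.range (Dtilde A.D p)).mkQ (Finsupp.single (mm s) (a s)))
        = ∑ᶠ jv : Fin m → Fin p → ℕ,
            (∏ s : Fin m, ∏ i : Fin p, genChoose (mm s.castSucc i) (jv s i)) •
              (LinearMap.range (Dtilde A.D p)).mkQ
                (Finsupp.single ((∑ s, mm s) - fun i => ∑ s : Fin m, ((jv s i : ℤ)))
                  (A.prodl (fun s => ∑ i, jv s i) a)))
    (i : Fin p) (mm : Fin (m + 1) → Fin p → ℤ) (a : Fin (m + 1) → R) :
    dQuot A.D p i (B (fun s =>
        (LinearMap.range (Dtilde A.D p)).mkQ (Finsupp.single (mm s) (a s))))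
      = ∑ j : Fin (m + 1),
          B (Function.update
              (fun s => (LinearMap.range (Dtilde A.D p)).mkQ (Finsupp.single (mm s) (a s)))
              j (dQuot A.D p i
                  ((LinearMap.range (Dtilde A.D p)).mkQ (Finsupp.single (mm j) (a j))))) := by
  classical
  obtain ⟨N, hN⟩ := A.locFin a
  set T : Finset (Fin m → Fin p → ℕ) :=
    Fintype.piFinset (fun _ => Fintype.piFinset (fun _ => Finset.range (N + 1))) with hT
  have hTmem : ∀ jv : Fin m → Fin p → ℕ,
      A.prodl (fun s => ∑ i', jv s i') a ≠ 0 → jv ∈ T := by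
    intro jv hjv
    have hlt : ∑ s, ∑ i', jv s i' < N := by
      by_contra h
      exact hjv (hN _ (le_of_not_gt h))
    rw [hT, Fintype.mem_piFinset]
    intro s
    rw [Fintype.mem_piFinset]
    intro i'
    rw [Finset.mem_range]
    have h1 : jv s i' ≤ ∑ i'', jv s i'' :=
      Finset.single_le_sum (fun _ _ => Nat.zero_le _) (Finset.mem_univ i')
    have h2 : (∑ i'', jv s i'') ≤ ∑ s', ∑ i'', jv s' i'' :=
      Finset.single_le_sum (f := fun s' => ∑ i'', jv s' i'')
        (fun _ _ => Nat.zero_le _) (Finset.mem_univ s)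
    omega
  have hsupp : ∀ (c : (Fin m → Fin p → ℕ) → ℂ)
      (idx : (Fin m → Fin p → ℕ) → (Fin p → ℤ)),
      (Function.support fun jv => c jv • (LinearMap.range (Dtilde A.D p)).mkQ
          (Finsupp.single (idx jv) (A.prodl (fun s => ∑ i', jv s i') a))) ⊆ ↑T := by
    intro c idx jv hjv
    refine hTmem jv fun h0 => hjv ?_
    simp only [h0, Finsupp.single_zero, map_zero, smul_zero]
  have hidx : ∀ j : Fin (m + 1),
      ∑ s, Function.update mm j (mm j - Pi.single i 1) s = (∑ s, mm s) - Pi.single i 1 := by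
    intro j
    rw [Finset.sum_update_of_mem (Finset.mem_univ j),
      ← Finset.add_sum_erase _ mm (Finset.mem_univ j), Finset.sdiff_singleton_eq_erase]
    abel
  have hupd : ∀ j : Fin (m + 1),
      B (Function.update
          (fun s => (LinearMap.range (Dtilde A.D p)).mkQ (Finsupp.single (mm s) (a s)))
          j (dQuot A.D p i
              ((LinearMap.range (Dtilde A.D p)).mkQ (Finsupp.single (mm j) (a j)))))
        = (mm j i : ℂ) • ∑ jv ∈ T,
            (∏ s : Fin m, ∏ i' : Fin p,
              genChoose ((Function.update mm j (mm j - Pi.single i 1)) s.castSucc i')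
                (jv s i')) •
              (LinearMap.range (Dtilde A.D p)).mkQ
                (Finsupp.single
                  (((∑ s, mm s) - fun i' => ∑ s : Fin m, ((jv s i' : ℤ))) - Pi.single i 1)
                  (A.prodl (fun s => ∑ i', jv s i') a)) := by
    intro j
    rw [dQuot_single, MultilinearMap.map_update_smul]
    congr 1
    have hfun : Function.update
        (fun s => (LinearMap.range (Dtilde A.D p)).mkQ (Finsupp.single (mm s) (a s))) j
        ((LinearMap.range (Dtilde A.D p)).mkQ
          (Finsupp.single (mm j - Pi.single i 1) (a j)))
        = fun s => (LinearMap.range (Dtilde A.D p)).mkQ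
            (Finsupp.single ((Function.update mm j (mm j - Pi.single i 1)) s) (a s)) := by
      funext s
      rcases eq_or_ne s j with rfl | h
      · simp
      · rw [Function.update_of_ne h, Function.update_of_ne h]
    rw [hfun, hB, finsum_eq_sum_of_support_subset _ (hsupp _ _)]
    refine Finset.sum_congr rfl fun jv _ => ?_
    have hidx2 : (∑ s, Function.update mm j (mm j - Pi.single i 1) s)
        - (fun i' => ∑ s : Fin m, ((jv s i' : ℤ)))
        = ((∑ s, mm s) - fun i' => ∑ s : Fin m, ((jv s i' : ℤ))) - Pi.single i 1 := by
      rw [hidx j, sub_right_comm]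
    rw [hidx2]
  rw [hB, finsum_eq_sum_of_support_subset _ (hsupp _ _), map_sum,
    Finset.sum_congr rfl (fun j (_ : j ∈ Finset.univ) => hupd j)]
  simp only [map_smul, dQuot_single]
  rw [Finset.sum_congr rfl (fun j (_ : j ∈ (Finset.univ : Finset (Fin (m+1)))) =>
    Finset.smul_sum), Finset.sum_comm]
  refine Finset.sum_congr rfl fun jv _ => ?_
  rw [smul_smul, Finset.sum_congr rfl (fun j (_ : j ∈ (Finset.univ : Finset (Fin (m+1)))) =>
    smul_smul _ _ _), ← Finset.sum_smul]
  congr 1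
  rw [scalar_identity i mm jv]
  simp only [Pi.sub_apply, Finset.sum_apply]
  push_cast
  ring
/-- Let `R` be an `n`-Lie conformal algebra (`n = m + 1`) and
`ℒie_p R = R[t₁^{±1},…,t_p^{±1}]/∂̃_p(⋯)`, with `a_{m₁,…,m_p}` the class of
`a ⊗ t₁^{m₁}⋯t_p^{m_p}`, equipped with the `n`-Lie bracket `(7)` determined on monomial
classes by binomial sums of the conformal products.  Then for each `i` the map
`∂_{t_i}(a_{m₁,…,m_p}) = m_i a_{m₁,…,m_i−1,…,m_p}` is a well-defined linear map which is
a derivation of the bracket. -/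
theorem stmt11 {m : ℕ} [NeZero m] {R : Type*} [AddCommGroup R] [Module ℂ R]
    (A : NLieConfAlg m R) (p : ℕ) (hp : 0 < p)
    (B : MultilinearMap ℂ
      (fun _ : Fin (m + 1) => ((Fin p → ℤ) →₀ R) ⧸ LinearMap.range (Dtilde A.D p))
      (((Fin p → ℤ) →₀ R) ⧸ LinearMap.range (Dtilde A.D p)))
    (hB : ∀ (mm : Fin (m + 1) → Fin p → ℤ) (a : Fin (m + 1) → R),
      B (fun s => (LinearMap.range (Dtilde A.D p)).mkQ (Finsupp.single (mm s) (a s)))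
        = ∑ᶠ jv : Fin m → Fin p → ℕ,
            (∏ s : Fin m, ∏ i : Fin p, genChoose (mm s.castSucc i) (jv s i)) •
              (LinearMap.range (Dtilde A.D p)).mkQ
                (Finsupp.single ((∑ s, mm s) - fun i => ∑ s : Fin m, ((jv s i : ℤ)))
                  (A.prodl (fun s => ∑ i, jv s i) a))) :
    ∀ i : Fin p,
      ∃ d : (((Fin p → ℤ) →₀ R) ⧸ LinearMap.range (Dtilde A.D p)) →ₗ[ℂ]
            (((Fin p → ℤ) →₀ R) ⧸ LinearMap.range (Dtilde A.D p)),
        (∀ (mm : Fin p → ℤ) (a : R),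
          d ((LinearMap.range (Dtilde A.D p)).mkQ (Finsupp.single mm a))
            = ((mm i : ℂ)) •
                (LinearMap.range (Dtilde A.D p)).mkQ
                  (Finsupp.single (mm - Pi.single i 1) a)) ∧
        (∀ x : Fin (m + 1) →
            ((Fin p → ℤ) →₀ R) ⧸ LinearMap.range (Dtilde A.D p),
          d (B x) = ∑ j : Fin (m + 1), B (Function.update x j (d (x j)))) := by
  classical
  intro i
  refine ⟨dQuot A.D p i, fun mm a => dQuot_single A.D p i mm a, ?_⟩
  have hmain : ∀ x : Fin (m + 1) → ((Fin p → ℤ) →₀ R) ⧸ LinearMap.range (Dtilde A.D p),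
      ((dQuot A.D p i).compMultilinearMap B) x
        = (∑ j : Fin (m + 1), B.compLinearMap
            (fun s => if s = j then dQuot A.D p i else LinearMap.id)) x := by
    refine multilinear_eq_on_span _ _ _ (span_monomials A.D p) ?_
    intro x hx
    choose mmf af hxf using hx
    have hx' : x = fun s =>
        (LinearMap.range (Dtilde A.D p)).mkQ (Finsupp.single (mmf s) (af s)) := funext hxf
    rw [hx']
    simp only [LinearMap.compMultilinearMap_apply, MultilinearMap.sum_apply,
      MultilinearMap.compLinearMap_apply]
    rw [deriv_mono A p B hB i mmf af]
    refine Finset.sum_congr rfl fun j _ => ?_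
    congr 1
    funext s
    rcases eq_or_ne s j with rfl | h
    · simp
    · simp [Function.update_of_ne h, h]
  intro x
  have := hmain x
  simp only [LinearMap.compMultilinearMap_apply, MultilinearMap.sum_apply,
    MultilinearMap.compLinearMap_apply] at this
  rw [this]
  refine Finset.sum_congr rfl fun j _ => ?_
  congr 1
  funext s
  rcases eq_or_ne s j with rfl | h
  · simp
  · simp [Function.update_of_ne h, h]
end
end

section
/- Let R be an n-Lie conformal algebra that is a free ℂ[∂]-module. Then R is commutative (all conformal products vanish) if and only if the associated n-Lie algebra (ℒie_p R)_− is commutative (all n-Lie brackets vanish), for any p ≥ 1. -/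
noncomputable section

open Finset

variable {m : ℕ} [NeZero m] {R : Type*} [AddCommGroup R] [Module ℂ R]

namespace Stmt15Aux

open Polynomial

lemma genChoose_zero (z : ℤ) : genChoose z 0 = 1 := by
  simp [genChoose]

lemma genChoose_nat_eq_zero {a j : ℕ} (h : a < j) : genChoose (a : ℤ) j = 0 := by
  have h0 : (((a : ℤ) : ℂ) - ((a : ℕ) : ℂ)) = 0 := by push_cast; ring
  rw [genChoose, Finset.prod_eq_zero (Finset.mem_range.2 h) h0, zero_div]

lemma prod_range_sub_nat (a : ℕ) : ∏ i ∈ Finset.range a, (a - i) = a.factorial := by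
  induction a with
  | zero => simp
  | succ n ih =>
    rw [Finset.prod_range_succ']
    simp only [Nat.succ_sub_succ, Nat.sub_zero]
    rw [ih, Nat.factorial_succ, Nat.mul_comm]

lemma prod_range_cast_sub (a : ℕ) :
    ∏ i ∈ Finset.range a, (((a : ℤ) : ℂ) - (i : ℂ)) = (a.factorial : ℂ) := by
  have h : ∀ i ∈ Finset.range a, (((a : ℤ) : ℂ) - (i : ℂ)) = ((a - i : ℕ) : ℂ) := by
    intro i hi
    have hia : i ≤ a := le_of_lt (Finset.mem_range.1 hi)
    rw [Nat.cast_sub hia]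
    push_cast
    ring
  rw [Finset.prod_congr rfl h, ← Nat.cast_prod, prod_range_sub_nat]

lemma genChoose_self (a : ℕ) : genChoose (a : ℤ) a = 1 := by
  rw [genChoose, prod_range_cast_sub, div_self]
  exact_mod_cast a.factorial_ne_zero

lemma sum_pi_single {p : ℕ} (i0 : Fin p) (c : ℤ) : ∑ j, Pi.single i0 c j = c := by
  simp [Pi.single_apply]

/-- The "lower `∂`-degree" operator `T` on `(Fin p → ℤ) →₀ (ι →₀ ℂ)`. -/
def Top (ι : Type*) (p : ℕ) :
    ((Fin p → ℤ) →₀ (ι →₀ ℂ)) →ₗ[ℂ] ((Fin p → ℤ) →₀ (ι →₀ ℂ)) :=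
  Finsupp.lsum ℂ (fun mm : Fin p → ℤ =>
    ∑ i : Fin p, (-(mm i : ℂ)) •
      (Finsupp.lsingle (mm - Pi.single i 1) : (ι →₀ ℂ) →ₗ[ℂ] ((Fin p → ℤ) →₀ (ι →₀ ℂ))))

lemma Top_single {ι : Type*} {p : ℕ} (mm : Fin p → ℤ) (v : ι →₀ ℂ) :
    Top ι p (Finsupp.single mm v)
      = - ∑ i : Fin p, (mm i : ℂ) • Finsupp.single (mm - Pi.single i 1) v := by
  rw [Top, Finsupp.lsum_single]
  simp only [LinearMap.sum_apply, LinearMap.smul_apply, Finsupp.lsingle_apply]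
  have h1 : ∀ i : Fin p, (-(mm i : ℂ)) •
        (Finsupp.single (mm - Pi.single i 1) v : (Fin p → ℤ) →₀ (ι →₀ ℂ))
      = -(((mm i : ℂ)) • Finsupp.single (mm - Pi.single i 1) v) :=
    fun i => neg_smul ((mm i : ℂ))
      (Finsupp.single (mm - Pi.single i 1) v : (Fin p → ℤ) →₀ (ι →₀ ℂ))
  have h2 : (∑ i : Fin p, -(((mm i : ℂ)) •
        (Finsupp.single (mm - Pi.single i 1) v : (Fin p → ℤ) →₀ (ι →₀ ℂ))))
      = - ∑ i : Fin p, ((mm i : ℂ)) • Finsupp.single (mm - Pi.single i 1) v :=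
    Finset.sum_neg_distrib (s := Finset.univ)
      (f := fun i : Fin p => ((mm i : ℂ)) • Finsupp.single (mm - Pi.single i 1) v)
  rw [Finset.sum_congr rfl (fun i _ => h1 i), h2]

lemma Top_apply {ι : Type*} {p : ℕ} (w : (Fin p → ℤ) →₀ (ι →₀ ℂ)) (μ : Fin p → ℤ) :
    Top ι p w μ = - ∑ i : Fin p, ((μ i + 1 : ℤ) : ℂ) • w (μ + Pi.single i 1) := by
  induction w using Finsupp.induction_linear with
  | zero => simp
  | add f g hf hg =>
    rw [map_add, Finsupp.add_apply, hf, hg, ← neg_add, ← Finset.sum_add_distrib]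
    congr 1
    apply Finset.sum_congr rfl
    intro i _
    rw [Finsupp.add_apply, smul_add]
  | single mm v =>
    rw [Top_single]
    simp only [Finsupp.coe_neg, Pi.neg_apply, Finset.sum_apply', Finsupp.smul_apply,
      Finsupp.single_apply, neg_inj]
    apply Finset.sum_congr rfl
    intro i _
    by_cases h : mm = μ + Pi.single i 1
    · have h1 : mm - Pi.single i 1 = μ := by rw [h]; abel
      have h2 : mm i = μ i + 1 := by rw [h]; simp
      simp [h1, h, h2]
    · have h1 : mm - Pi.single i 1 ≠ μ := by
        intro hc
        exact h (by rw [← hc]; abel)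
      simp [h1, h]

lemma Top_pow_supp {ι : Type*} {p : ℕ} (nn : Fin p → ℤ) (v : ι →₀ ℂ) :
    ∀ (k : ℕ) (μ : Fin p → ℤ), (∃ i, nn i < μ i) →
      ((Top ι p) ^ k) (Finsupp.single nn v) μ = 0 := by
  intro k
  induction k with
  | zero =>
    rintro μ ⟨i, hi⟩
    have hne : nn ≠ μ := by
      intro h
      rw [h] at hi
      exact lt_irrefl _ hi
    simp [Finsupp.single_apply, hne]
  | succ k ih =>
    rintro μ ⟨i, hi⟩
    rw [pow_succ', Module.End.mul_apply, Top_apply, neg_eq_zero]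
    apply Finset.sum_eq_zero
    intro j _
    have hx : ∃ i', nn i' < (μ + (Pi.single j 1 : Fin p → ℤ)) i' := by
      refine ⟨i, ?_⟩
      have h1 : (0 : ℤ) ≤ (Pi.single j 1 : Fin p → ℤ) i := by
        rw [Pi.single_apply]
        split <;> omega
      have h3 : (μ + (Pi.single j 1 : Fin p → ℤ)) i
          = μ i + (Pi.single j 1 : Fin p → ℤ) i := rfl
      omega
    rw [ih (μ + Pi.single j 1) hx, smul_zero]

lemma Top_pow_deg {ι : Type*} {p : ℕ} (nn : Fin p → ℤ) (v : ι →₀ ℂ) :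
    ∀ (k : ℕ) (μ : Fin p → ℤ), (∑ i, μ i) ≠ (∑ i, nn i) - (k : ℤ) →
      ((Top ι p) ^ k) (Finsupp.single nn v) μ = 0 := by
  intro k
  induction k with
  | zero =>
    intro μ hμ
    have hne : nn ≠ μ := by
      intro h
      apply hμ
      rw [h]
      simp
    simp [Finsupp.single_apply, hne]
  | succ k ih =>
    intro μ hμ
    rw [pow_succ', Module.End.mul_apply, Top_apply, neg_eq_zero]
    apply Finset.sum_eq_zero
    intro j _
    have hx : ∑ i, (μ + (Pi.single j 1 : Fin p → ℤ)) i ≠ (∑ i, nn i) - ((k : ℕ) : ℤ) := by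
      have h1 : ∑ i, (μ + (Pi.single j 1 : Fin p → ℤ)) i = (∑ i, μ i) + 1 := by
        simp only [Pi.add_apply, Finset.sum_add_distrib, sum_pi_single]
      rw [h1]
      push_cast at hμ ⊢
      omega
    rw [ih (μ + Pi.single j 1) hx, smul_zero]

lemma Top_pow_val {ι : Type*} {p : ℕ} (hp : 0 < p) (nn : Fin p → ℤ) (v : ι →₀ ℂ) (k : ℕ) :
    ((Top ι p) ^ k) (Finsupp.single nn v) (nn - Pi.single ⟨0, hp⟩ (k : ℤ))
      = ((-1 : ℂ) ^ k * ∏ j ∈ Finset.range k, (((nn ⟨0, hp⟩ : ℤ) : ℂ) - (j : ℂ))) • v := by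
  induction k with
  | zero => simp
  | succ k ih =>
    set i0 : Fin p := ⟨0, hp⟩ with hi0
    rw [pow_succ', Module.End.mul_apply, Top_apply]
    rw [Finset.sum_eq_single i0 ?hother ?hnot]
    case hnot => intro h; exact absurd (Finset.mem_univ i0) h
    case hother =>
      intro i _ hi
      have hx : ∃ i', nn i' <
          ((nn - (Pi.single i0 (((k:ℕ)+1 : ℕ) : ℤ) : Fin p → ℤ))
            + (Pi.single i 1 : Fin p → ℤ)) i' := by
        refine ⟨i, ?_⟩
        have h1 : (Pi.single i0 (((k:ℕ)+1 : ℕ) : ℤ) : Fin p → ℤ) i = 0 := by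
          rw [Pi.single_apply, if_neg hi]
        have h2 : (Pi.single i 1 : Fin p → ℤ) i = 1 := by simp
        have h3 : ((nn - (Pi.single i0 (((k:ℕ)+1 : ℕ) : ℤ) : Fin p → ℤ))
              + (Pi.single i 1 : Fin p → ℤ)) i
            = nn i - (Pi.single i0 (((k:ℕ)+1 : ℕ) : ℤ) : Fin p → ℤ) i
              + (Pi.single i 1 : Fin p → ℤ) i := rfl
        rw [h3, h1, h2]
        omega
      rw [Top_pow_supp nn v k _ hx, smul_zero]
    · have harg : (nn - (Pi.single i0 (((k:ℕ)+1 : ℕ) : ℤ) : Fin p → ℤ))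
            + (Pi.single i0 1 : Fin p → ℤ)
          = nn - (Pi.single i0 ((k : ℕ) : ℤ) : Fin p → ℤ) := by
        funext j
        by_cases h : j = i0
        · subst h
          simp only [Pi.add_apply, Pi.sub_apply, Pi.single_eq_same]
          push_cast
          ring
        · simp only [Pi.add_apply, Pi.sub_apply, Pi.single_apply, if_neg h]
          ring
      rw [harg, ih]
      have hcoef : ((nn - (Pi.single i0 (((k:ℕ)+1 : ℕ) : ℤ) : Fin p → ℤ)) i0 + 1 : ℤ)
          = nn i0 - k := by
        simp only [Pi.sub_apply, Pi.single_eq_same]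
        push_cast
        ring
      rw [hcoef, smul_smul]
      refine ((neg_smul _ v).symm.trans ?_)
      congr 1
      rw [Finset.prod_range_succ]
      push_cast
      ring

/-- Evaluation of a polynomial in `T` at a fixed vector, as a linear map. -/
def evalAt {W : Type*} [AddCommGroup W] [Module ℂ W] (T : Module.End ℂ W) (v : W) :
    Polynomial ℂ →ₗ[ℂ] W where
  toFun q := Polynomial.aeval T q v
  map_add' q₁ q₂ := by simp [map_add, LinearMap.add_apply]
  map_smul' c q := by simp [map_smul]

@[simp] lemma evalAt_apply {W : Type*} [AddCommGroup W] [Module ℂ W]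
    (T : Module.End ℂ W) (v : W) (q : Polynomial ℂ) :
    evalAt T v q = Polynomial.aeval T q v := rfl

lemma single_mem_range_imp_zero {R : Type*} [AddCommGroup R] [Module ℂ R]
    [Module (Polynomial ℂ) R] [IsScalarTower ℂ (Polynomial ℂ) R]
    [Module.Free (Polynomial ℂ) R]
    (D : Module.End ℂ R) (hXD : ∀ r : R, (X : Polynomial ℂ) • r = D r)
    (p : ℕ) (hp : 0 < p) (r : R)
    (h : ∀ K : ℕ, Finsupp.single (fun _ => (K : ℤ)) r ∈ LinearMap.range (Dtilde D p)) :
    r = 0 := by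
  classical
  set ι := Module.Free.ChooseBasisIndex (Polynomial ℂ) R with hι
  set b : Module.Basis ι (Polynomial ℂ) R := Module.Free.chooseBasis (Polynomial ℂ) R with hb
  set T := Top ι p with hT
  set brepr : R →ₗ[ℂ] (ι →₀ Polynomial ℂ) :=
    (b.repr.toLinearMap).restrictScalars ℂ with hbrepr
  set ψin : (Fin p → ℤ) → R →ₗ[ℂ] ((Fin p → ℤ) →₀ (ι →₀ ℂ)) := fun mm =>
    (Finsupp.lsum ℂ (fun i : ι =>
      evalAt T (Finsupp.single mm (Finsupp.single i (1:ℂ))))) ∘ₗ brepr with hψin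
  set ψ : ((Fin p → ℤ) →₀ R) →ₗ[ℂ] ((Fin p → ℤ) →₀ (ι →₀ ℂ)) :=
    Finsupp.lsum ℂ ψin with hψ
  have hψs : ∀ (mm : Fin p → ℤ) (r' : R), ψ (Finsupp.single mm r')
      = (brepr r').sum (fun i q =>
          Polynomial.aeval T q (Finsupp.single mm (Finsupp.single i (1:ℂ)))) := by
    intro mm r'
    rw [hψ, Finsupp.lsum_single, hψin]
    simp only [LinearMap.comp_apply, Finsupp.lsum_apply]
    rfl
  have hDs : ∀ (mm : Fin p → ℤ) (r' : R), Dtilde D p (Finsupp.single mm r')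
      = Finsupp.single mm (D r')
        + ∑ i, (mm i : ℂ) • Finsupp.single (mm - Pi.single i 1) r' := by
    intro mm r'
    rw [Dtilde, Finsupp.lsum_single]
    simp [LinearMap.add_apply, LinearMap.comp_apply, LinearMap.sum_apply,
      LinearMap.smul_apply, Finsupp.lsingle_apply]
  have hcomm : ∀ (q : Polynomial ℂ) (w : (Fin p → ℤ) →₀ (ι →₀ ℂ)),
      Polynomial.aeval T q (T w) = T (Polynomial.aeval T q w) := by
    intro q w
    have h2 : (Polynomial.aeval T q) * T = T * (Polynomial.aeval T q) := by
      calc Polynomial.aeval T q * T = Polynomial.aeval T (q * X) := by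
            rw [map_mul, Polynomial.aeval_X]
        _ = Polynomial.aeval T (X * q) := by rw [mul_comm]
        _ = T * Polynomial.aeval T q := by rw [map_mul, Polynomial.aeval_X]
    calc Polynomial.aeval T q (T w) = ((Polynomial.aeval T q) * T) w := rfl
      _ = (T * (Polynomial.aeval T q)) w := by rw [h2]
      _ = T (Polynomial.aeval T q w) := rfl
  have hψD : ∀ x, ψ (Dtilde D p x) = 0 := by
    intro x
    induction x using Finsupp.induction_linear with
    | zero => simp
    | add f g hf hg =>
      rw [map_add, map_add, hf, hg]
      abel
    | single mm r' =>
      rw [hDs, map_add, map_sum]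
      simp only [map_smul]
      have claim1 : ψ (Finsupp.single mm (D r')) = T (ψ (Finsupp.single mm r')) := by
        have hXr : brepr (D r') = (X : Polynomial ℂ) • brepr r' := by
          rw [← hXD r']
          simp only [hbrepr, LinearMap.restrictScalars_apply, LinearEquiv.coe_coe]
          exact b.repr.map_smul X r'
        rw [hψs, hψs, hXr,
          Finsupp.sum_smul_index' (fun i => by simp),
          map_finsuppSum]
        apply Finsupp.sum_congr
        intro i _
        rw [smul_eq_mul, map_mul, Polynomial.aeval_X, Module.End.mul_apply]
      have claim2 : (∑ i, (mm i : ℂ) • ψ (Finsupp.single (mm - Pi.single i 1) r'))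
          + T (ψ (Finsupp.single mm r')) = 0 := by
        have key' : ∀ (q : Polynomial ℂ) (vj : ι →₀ ℂ),
            (∑ i, (mm i : ℂ) • Polynomial.aeval T q
                (Finsupp.single (mm - Pi.single i 1) vj))
              + T (Polynomial.aeval T q (Finsupp.single mm vj)) = 0 := by
          intro q vj
          have h3 : ∑ i, (mm i : ℂ) • Polynomial.aeval T q
                (Finsupp.single (mm - Pi.single i 1) vj)
              = Polynomial.aeval T q
                  (∑ i, (mm i : ℂ) • Finsupp.single (mm - Pi.single i 1) vj) := by
            rw [map_sum]
            simp only [map_smul]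
          have h5 : T (Polynomial.aeval T q (Finsupp.single mm vj))
              = Polynomial.aeval T q (T (Finsupp.single mm vj)) := (hcomm q _).symm
          have h6 : (∑ i, (mm i : ℂ) • Finsupp.single (mm - Pi.single i 1) vj)
              + T (Finsupp.single mm vj) = 0 := by
            rw [hT, Top_single]
            exact add_neg_cancel
              (∑ i : Fin p, ((mm i : ℂ)) • Finsupp.single (mm - Pi.single i 1) vj)
          calc (∑ i, (mm i : ℂ) • Polynomial.aeval T q
                  (Finsupp.single (mm - Pi.single i 1) vj))
                + T (Polynomial.aeval T q (Finsupp.single mm vj))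
              = Polynomial.aeval T q
                    (∑ i, (mm i : ℂ) • Finsupp.single (mm - Pi.single i 1) vj)
                  + Polynomial.aeval T q (T (Finsupp.single mm vj)) := by rw [h3, h5]
            _ = Polynomial.aeval T q
                  ((∑ i, (mm i : ℂ) • Finsupp.single (mm - Pi.single i 1) vj)
                    + T (Finsupp.single mm vj)) := (map_add _ _ _).symm
            _ = 0 := by rw [h6, map_zero]
        have hA : ∀ i : Fin p, (mm i : ℂ) • ψ (Finsupp.single (mm - Pi.single i 1) r')
            = ∑ j ∈ (brepr r').support, (mm i : ℂ) • Polynomial.aeval T ((brepr r') j)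
                (Finsupp.single (mm - Pi.single i 1) (Finsupp.single j (1:ℂ))) := by
          intro i
          rw [hψs]
          exact map_sum (DistribSMul.toAddMonoidHom ((Fin p → ℤ) →₀ (ι →₀ ℂ)) ((mm i : ℂ)))
            (fun j => Polynomial.aeval T ((brepr r') j)
              (Finsupp.single (mm - Pi.single i 1) (Finsupp.single j (1:ℂ))))
            (brepr r').support
        have hB2 : T (ψ (Finsupp.single mm r'))
            = ∑ j ∈ (brepr r').support, T (Polynomial.aeval T ((brepr r') j)
                (Finsupp.single mm (Finsupp.single j (1:ℂ)))) := by
          rw [hψs]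
          exact map_sum T (fun j => Polynomial.aeval T ((brepr r') j)
            (Finsupp.single mm (Finsupp.single j (1:ℂ)))) (brepr r').support
        have hC : (∑ i : Fin p, ∑ j ∈ (brepr r').support,
              (mm i : ℂ) • Polynomial.aeval T ((brepr r') j)
                (Finsupp.single (mm - Pi.single i 1) (Finsupp.single j (1:ℂ))))
            = ∑ j ∈ (brepr r').support, ∑ i : Fin p,
              (mm i : ℂ) • Polynomial.aeval T ((brepr r') j)
                (Finsupp.single (mm - Pi.single i 1) (Finsupp.single j (1:ℂ))) :=
          Finset.sum_comm
        have hD : (∑ j ∈ (brepr r').support, ∑ i : Fin p,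
              (mm i : ℂ) • Polynomial.aeval T ((brepr r') j)
                (Finsupp.single (mm - Pi.single i 1) (Finsupp.single j (1:ℂ))))
            + ∑ j ∈ (brepr r').support, T (Polynomial.aeval T ((brepr r') j)
                (Finsupp.single mm (Finsupp.single j (1:ℂ))))
            = ∑ j ∈ (brepr r').support, ((∑ i : Fin p,
              (mm i : ℂ) • Polynomial.aeval T ((brepr r') j)
                (Finsupp.single (mm - Pi.single i 1) (Finsupp.single j (1:ℂ))))
              + T (Polynomial.aeval T ((brepr r') j)
                (Finsupp.single mm (Finsupp.single j (1:ℂ))))) :=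
          Finset.sum_add_distrib.symm
        rw [Finset.sum_congr rfl (fun i _ => hA i), hB2, hC, hD]
        exact Finset.sum_eq_zero (fun j _ => key' ((brepr r') j) (Finsupp.single j (1:ℂ)))
      rw [claim1]
      calc T (ψ (Finsupp.single mm r'))
            + ∑ i, (mm i : ℂ) • ψ (Finsupp.single (mm - Pi.single i 1) r')
          = (∑ i, (mm i : ℂ) • ψ (Finsupp.single (mm - Pi.single i 1) r'))
            + T (ψ (Finsupp.single mm r')) :=
          add_comm (T (ψ (Finsupp.single mm r')))
            (∑ i, (mm i : ℂ) • ψ (Finsupp.single (mm - Pi.single i 1) r'))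
        _ = 0 := claim2
  have hgz : ∀ (i : ι) (K : ℕ), (brepr r i).coeff K = 0 := by
    intro i K
    set i0 : Fin p := ⟨0, hp⟩ with hi0d
    set nn : Fin p → ℤ := fun _ => (K : ℤ) with hnn
    obtain ⟨x, hx⟩ := h K
    have h0 : ψ (Finsupp.single nn r) = 0 := by rw [← hx, hψD]
    set μ0 : Fin p → ℤ := nn - Pi.single i0 (K : ℤ) with hμ0
    have h1 : (ψ (Finsupp.single nn r)) μ0 i = 0 := by rw [h0]; simp
    rw [hψs, Finsupp.sum_apply, Finsupp.sum_apply] at h1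
    have hterm : ∀ (j : ι) (q : Polynomial ℂ),
        (Polynomial.aeval T q (Finsupp.single nn (Finsupp.single j (1:ℂ)))) μ0 i
          = q.coeff K * (((-1 : ℂ) ^ K * (K.factorial : ℂ)) * (if j = i then 1 else 0)) := by
      intro j q
      have hdeg : ∀ l : ℕ, l ≠ K →
          ((T ^ l) (Finsupp.single nn (Finsupp.single j (1:ℂ)))) μ0 = 0 := by
        intro l hl
        rw [hT]
        apply Top_pow_deg
        have hs : ∑ i', μ0 i' = (∑ i', nn i') - (K : ℤ) := by
          simp only [hμ0, Pi.sub_apply, Finset.sum_sub_distrib, sum_pi_single]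
        rw [hs]
        omega
      have hval : ((T ^ K) (Finsupp.single nn (Finsupp.single j (1:ℂ)))) μ0
          = (((-1:ℂ)^K) * (K.factorial : ℂ)) • Finsupp.single j (1:ℂ) := by
        rw [hT, hμ0, hi0d]
        rw [Top_pow_val hp nn (Finsupp.single j (1:ℂ)) K]
        congr 2
        have hnn0 : nn ⟨0, hp⟩ = ((K:ℕ) : ℤ) := rfl
        rw [hnn0, prod_range_cast_sub]
      rw [Polynomial.aeval_eq_sum_range]
      simp only [LinearMap.sum_apply, LinearMap.smul_apply, Finset.sum_apply',
        Finsupp.smul_apply]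
      rw [Finset.sum_eq_single K ?h5 ?h6]
      case h5 =>
        intro l _ hl
        rw [hdeg l hl]
        simp
      case h6 =>
        intro hK
        have hlt : q.natDegree < K := by
          by_contra hc
          exact hK (Finset.mem_range.2 (by omega))
        rw [Polynomial.coeff_eq_zero_of_natDegree_lt hlt]
        simp
      · rw [hval]
        simp only [Finsupp.smul_apply, Finsupp.single_apply, smul_eq_mul]
    rw [Finsupp.sum] at h1
    rw [Finset.sum_congr rfl (fun j _ => hterm j (brepr r j))] at h1
    rw [Finset.sum_eq_single i ?hh1 ?hh2] at h1
    case hh1 =>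
      intro j _ hji
      simp [hji]
    case hh2 =>
      intro hi
      rw [Finsupp.notMem_support_iff.1 hi]
      simp
    · simp only [eq_self_iff_true, if_true, mul_one] at h1
      have hc : ((-1 : ℂ) ^ K * (K.factorial : ℂ)) ≠ 0 := by
        apply mul_ne_zero
        · exact pow_ne_zero _ (by norm_num)
        · exact_mod_cast K.factorial_ne_zero
      exact (mul_eq_zero.1 h1).resolve_right hc
  have hz1 : brepr r = 0 := by
    ext i K
    simpa using hgz i K
  have hz2 : b.repr r = 0 := hz1
  exact b.repr.map_eq_zero_iff.1 hz2

end Stmt15Aux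

/-- let `R` be an `n`-Lie conformal algebra (`n = m + 1`) which is free as
a `ℂ[∂]`-module.  Then `R` is commutative (all conformal products vanish) iff the
annihilation algebra `(ℒie_p R)₋` is commutative, i.e. all the `n`-Lie brackets (7) of
monomials `a_{m₁,…,m_p}` with `m₁,…,m_p ≥ 0` vanish in
`ℒie_p R = R[t₁^{±1},…,t_p^{±1}]/∂̃_p(⋯)`, for any `p ≥ 1`. -/
theorem stmt15 {m : ℕ} [NeZero m] {R : Type*} [AddCommGroup R] [Module ℂ R]
    [Module (Polynomial ℂ) R] [IsScalarTower ℂ (Polynomial ℂ) R]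
    [Module.Free (Polynomial ℂ) R]
    (A : NLieConfAlg m R)
    (hXD : ∀ r : R, (Polynomial.X : Polynomial ℂ) • r = A.D r)
    (p : ℕ) (hp : 0 < p) :
    (∀ (k : Fin m → ℕ) (x : Fin (m + 1) → R), A.prodl k x = 0) ↔
      (∀ (mm : Fin (m + 1) → Fin p → ℤ), (∀ s i, 0 ≤ mm s i) →
        ∀ a : Fin (m + 1) → R,
          (∑ᶠ jv : Fin m → Fin p → ℕ,
              (∏ s : Fin m, ∏ i : Fin p, genChoose (mm s.castSucc i) (jv s i)) •
                Finsupp.single ((∑ s, mm s) - fun i => ∑ s : Fin m, ((jv s i : ℤ)))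
                  (A.prodl (fun s => ∑ i, jv s i) a))
            ∈ LinearMap.range (Dtilde A.D p)) := by
  classical
  constructor
  · intro h mm hmm a
    simp only [h, Finsupp.single_zero, smul_zero, finsum_zero]
    exact Submodule.zero_mem _
  · intro h k x
    have key : ∀ N : ℕ, ∀ k : Fin m → ℕ, (∑ s, k s) < N → ∀ x : Fin (m+1) → R,
        A.prodl k x = 0 := by
      intro N
      induction N with
      | zero => intro k hk x; exact absurd hk (Nat.not_lt_zero _)
      | succ N ih =>
        intro k hk x
        apply Stmt15Aux.single_mem_range_imp_zero A.D hXD p hp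
        intro K
        set i0 : Fin p := ⟨0, hp⟩ with hi0
        set mm : Fin (m+1) → Fin p → ℤ :=
          Fin.snoc (fun s i => if i = i0 then (k s : ℤ) else 0) (fun _ => (K : ℤ)) with hmmd
        have hcast : ∀ s : Fin m, mm s.castSucc = fun i => if i = i0 then (k s : ℤ) else 0 := by
          intro s
          rw [hmmd]
          exact Fin.snoc_castSucc _ _ _
        have hlast : mm (Fin.last m) = fun _ => (K : ℤ) := by
          rw [hmmd]
          exact Fin.snoc_last _ _
        have hmm : ∀ s i, 0 ≤ mm s i := by
          intro s i
          induction s using Fin.lastCases with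
          | last => rw [hlast]; exact Int.natCast_nonneg K
          | cast s =>
            rw [hcast]
            dsimp only
            split
            · exact Int.natCast_nonneg _
            · exact le_refl 0
        have hB := h mm hmm x
        set S : Finset (Fin m → Fin p → ℕ) :=
          Fintype.piFinset (fun s => Fintype.piFinset (fun i =>
            Finset.range (if i = i0 then k s + 1 else 1))) with hS
        have hsupp : Function.support (fun jv : Fin m → Fin p → ℕ =>
            (∏ s : Fin m, ∏ i : Fin p, genChoose (mm s.castSucc i) (jv s i)) •
              Finsupp.single ((∑ s, mm s) - fun i => ∑ s : Fin m, ((jv s i : ℤ)))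
                (A.prodl (fun s => ∑ i, jv s i) x)) ⊆ ↑S := by
          intro jv hjv
          by_contra hns
          apply Function.mem_support.mp hjv
          simp only [hS, Finset.mem_coe, Fintype.mem_piFinset, Finset.mem_range, not_forall,
            not_lt] at hns
          obtain ⟨s, i, hsi⟩ := hns
          have hz : genChoose (mm s.castSucc i) (jv s i) = 0 := by
            rw [hcast s]
            simp only
            by_cases hii : i = i0
            · rw [if_pos hii]
              refine Stmt15Aux.genChoose_nat_eq_zero ?_
              rw [if_pos hii] at hsi
              omega
            · rw [if_neg hii]
              have h00 : (0:ℤ) = ((0:ℕ):ℤ) := rfl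
              rw [h00]
              refine Stmt15Aux.genChoose_nat_eq_zero ?_
              rw [if_neg hii] at hsi
              omega
          have hprod : (∏ s' : Fin m, ∏ i' : Fin p,
              genChoose (mm s'.castSucc i') (jv s' i')) = 0 :=
            Finset.prod_eq_zero (Finset.mem_univ s)
              (Finset.prod_eq_zero (Finset.mem_univ i) hz)
          rw [hprod, zero_smul]
        rw [finsum_eq_finset_sum_of_support_subset _ hsupp] at hB
        set jt : Fin m → Fin p → ℕ := fun s i => if i = i0 then k s else 0 with hjt
        have hjtS : jt ∈ S := by
          simp only [hS, Fintype.mem_piFinset, Finset.mem_range, hjt]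
          intro s i
          by_cases hii : i = i0 <;> simp [hii]
        rw [Finset.sum_eq_single_of_mem jt hjtS ?hother] at hB
        case hother =>
          intro jv hjvS hne
          have hbound : ∀ s i, jv s i < if i = i0 then k s + 1 else 1 := by
            simpa only [hS, Fintype.mem_piFinset, Finset.mem_range] using hjvS
          have hzero_ne : ∀ s i, i ≠ i0 → jv s i = 0 := by
            intro s i hi
            have hb := hbound s i
            rw [if_neg hi] at hb
            omega
          have hrow : ∀ s, ∑ i, jv s i = jv s i0 := by
            intro s
            apply Finset.sum_eq_single i0 (fun i _ hi => hzero_ne s i hi)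
            intro hcon
            exact absurd (Finset.mem_univ i0) hcon
          have hle : ∀ s, jv s i0 ≤ k s := by
            intro s
            have hb := hbound s i0
            rw [if_pos rfl] at hb
            omega
          have hex : ∃ s, jv s i0 < k s := by
            by_contra hc
            push_neg at hc
            apply hne
            funext s i
            by_cases hi : i = i0
            · subst hi
              have h5 := hle s
              have h6 := hc s
              have h7 : jt s i0 = k s := by simp [hjt]
              omega
            · rw [hzero_ne s i hi, hjt]
              simp [hi]
          have hlt : (∑ s, ∑ i, jv s i) < N := by
            have h1 : ∑ s, ∑ i, jv s i = ∑ s, jv s i0 :=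
              Finset.sum_congr rfl (fun s _ => hrow s)
            have h2 : ∑ s, jv s i0 < ∑ s, k s :=
              Finset.sum_lt_sum (fun s _ => hle s)
                (hex.elim fun s hs => ⟨s, Finset.mem_univ s, hs⟩)
            omega
          rw [ih (fun s => ∑ i, jv s i) hlt x, Finsupp.single_zero, smul_zero]
        have hco : (∏ s : Fin m, ∏ i : Fin p, genChoose (mm s.castSucc i) (jt s i)) = 1 := by
          apply Finset.prod_eq_one
          intro s _
          apply Finset.prod_eq_one
          intro i _
          rw [hcast s, hjt]
          simp only
          by_cases hi : i = i0
          · rw [if_pos hi, if_pos hi]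
            exact Stmt15Aux.genChoose_self (k s)
          · rw [if_neg hi, if_neg hi]
            exact Stmt15Aux.genChoose_zero 0
        have harg : (fun s => ∑ i, jt s i) = k := by
          funext s
          rw [hjt]
          simp only
          rw [Finset.sum_ite_eq' Finset.univ i0 (fun _ => k s)]
          simp
        have hidx : ((∑ s, mm s) - fun i => ∑ s : Fin m, ((jt s i : ℤ))) = fun _ => (K : ℤ) := by
          funext i
          simp only [Pi.sub_apply, Finset.sum_apply]
          have h1 : ∑ s : Fin (m+1), mm s i
              = (∑ s : Fin m, mm s.castSucc i) + mm (Fin.last m) i :=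
            Fin.sum_univ_castSucc _
          rw [h1]
          have h2 : ∀ s : Fin m, mm s.castSucc i = if i = i0 then (k s : ℤ) else 0 :=
            fun s => by rw [hcast s]
          have h3 : ∀ s : Fin m, ((jt s i : ℕ) : ℤ) = if i = i0 then (k s : ℤ) else 0 := by
            intro s
            simp only [hjt]
            by_cases hii : i = i0 <;> simp [hii]
          rw [Finset.sum_congr rfl (fun s _ => h2 s), Finset.sum_congr rfl (fun s _ => h3 s),
            hlast]
          ring
        rw [hco, one_smul, harg, hidx] at hB
        exact hB
    exact key (∑ s, k s + 1) k (Nat.lt_succ_self _) x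
end
end
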